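/- Let F be a free group of rank d ≥ 2 and let S be a finite symmetric generating set of F, with word metric d_S. Then no metric functional in the metric-functional boundary ∂(F,d_S) has a finite orbit under the F-action: for every h ∈ ∂(F,d_S), the set {x.h : x ∈ F} is infinite. -/

import Mathlib

/-!
Write the metric functional as `h = lim b_{u n}`. As `h` is not a Busemann function, `u n` leaves
every ball, so for each `k` some point `y` of length `k` has `h y = -k`. If the orbit of `h` were
finite, positive powers `g₁ = a ^ e₁`, `g₂ = b ^ e₂` of two distinct generators would fix `h`,
i.e. `h (gᵢ * z) = h gᵢ + h z`. Then `y` and `gᵢ * y` lie close to word geodesics from `1` to some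
`u n`, hence, by the Morse lemma in the Cayley tree of the free group, close to the tree geodesic
from `1` to `u n`; this bounds the tree length of the conjugates `y⁻¹ * gᵢ * y` uniformly in `k`.
By pigeonhole two such points `y ≠ y'` give the same conjugates, so `y' * y⁻¹ ≠ 1` commutes with
`g₁` and `g₂`. Commuting elements of a free group generate a cyclic group, so a power of `a`
would equal a power of `b`, which is impossible.
-/

open Filter Topology

section Defs

variable {G : Type*}

/-- `d` is a metric on `X` (nonnegative, vanishing exactly on the diagonal,
symmetric, triangle inequality). -/
def IsMetric {X : Type*} (d : X → X → ℝ) : Prop :=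
  (∀ x y, 0 ≤ d x y) ∧ (∀ x y, d x y = 0 ↔ x = y) ∧ (∀ x y, d x y = d y x) ∧
    (∀ x y z, d x z ≤ d x y + d y z)

/-- The Busemann function of `x` with base point `1`: `b_x(y) = d(x,y) - d(x,1)`. -/
def bus [Group G] (d : G → G → ℝ) (x y : G) : ℝ := d x y - d x 1

/-- `h` belongs to the metric-functional boundary `∂(G,d)`: it is a pointwise
limit of Busemann functions and is not itself a Busemann function. -/
def InBoundary [Group G] (d : G → G → ℝ) (h : G → ℝ) : Prop :=
  (∃ u : ℕ → G, ∀ y : G, Tendsto (fun n => bus d (u n) y) atTop (𝓝 (h y))) ∧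
    ∀ x : G, h ≠ bus d x

/-- The action of `x ∈ G` on functions: `(x.h)(y) = h(x⁻¹y) - h(x⁻¹)`. -/
def act [Group G] (x : G) (h : G → ℝ) : G → ℝ := fun y => h (x⁻¹ * y) - h x⁻¹

/-- `S` is a finite symmetric generating set of `G`. -/
def FinSymGen [Group G] (S : Set G) : Prop :=
  S.Finite ∧ (∀ s ∈ S, s⁻¹ ∈ S) ∧ Subgroup.closure S = ⊤

/-- The word length of `x` with respect to `S`: the least `n` such that `x`
is a product of `n` elements of `S`. -/
noncomputable def wordLength [Group G] (S : Set G) (x : G) : ℕ :=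
  sInf {n : ℕ | ∃ l : List G, (∀ s ∈ l, s ∈ S) ∧ l.length = n ∧ l.prod = x}

/-- The word metric with respect to `S` : `d_S(x,y) = |x⁻¹y|_S`. -/
noncomputable def wordDist [Group G] (S : Set G) (x y : G) : ℝ :=
  (wordLength S (x⁻¹ * y) : ℝ)

/-- `(G,d)` is quasi-isometric to a Cayley graph of `G`. -/
def QIToCayley [Group G] (d : G → G → ℝ) : Prop :=
  ∃ S : Set G, FinSymGen S ∧ ∃ φ : G → G, ∃ C : ℝ, 0 < C ∧
    (∀ y : G, ∃ x : G, wordDist S (φ x) y ≤ C) ∧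
    ∀ x y : G, C⁻¹ * d x y - C ≤ wordDist S (φ x) (φ y) ∧
      wordDist S (φ x) (φ y) ≤ C * d x y + C

/-- A Banach metric on `G`: an integer-valued, left-invariant, proper metric,
quasi-isometric to a Cayley graph, all of whose metric functionals are unbounded. -/
def IsBanachMetric [Group G] (d : G → G → ℝ) : Prop :=
  IsMetric d ∧
  (∀ x y : G, ∃ n : ℕ, d x y = n) ∧
  (∀ x y z : G, d (z * x) (z * y) = d x y) ∧
  (∀ r : ℝ, {x : G | d x 1 ≤ r}.Finite) ∧
  QIToCayley d ∧
  ∀ h : G → ℝ, InBoundary d h → ¬ ∃ B : ℝ, ∀ x : G, |h x| ≤ B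

/-- A virtual homomorphism on `G`: a function `φ : G → ℤ` restricting to a
nontrivial homomorphism on some finite index subgroup. -/
def IsVirtualHom [Group G] (φ : G → ℤ) : Prop :=
  ∃ H : Subgroup G, H.FiniteIndex ∧
    (∀ a b : G, a ∈ H → b ∈ H → φ (a * b) = φ a + φ b) ∧
    ∃ a ∈ H, φ a ≠ 0

end Defs

theorem apply_prod_le_mul_length {M : Type*} [Monoid M] (f : M → ℕ) (h1 : f 1 = 0)
    (hmul : ∀ a b, f (a * b) ≤ f a + f b) {L : ℕ} :
    ∀ l : List M, (∀ s ∈ l, f s ≤ L) → f l.prod ≤ L * l.length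
  | [], _ => by simp [h1]
  | a :: l, hl => by
    have ha := hl a List.mem_cons_self
    have := apply_prod_le_mul_length f h1 hmul l fun s hs => hl s (List.mem_cons_of_mem a hs)
    rw [List.prod_cons, List.length_cons, mul_add_one]
    exact (hmul a l.prod).trans (by omega)

section WordLength

variable {G : Type*} [Group G] {S : Set G}

theorem wordLength_le_length {x : G} {l : List G} (hl : ∀ s ∈ l, s ∈ S) (hx : l.prod = x) :
    wordLength S x ≤ l.length :=
  Nat.sInf_le ⟨l, hl, rfl, hx⟩

theorem exists_list_length_eq_wordLength (hS : FinSymGen S) (x : G) :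
    ∃ l : List G, (∀ s ∈ l, s ∈ S) ∧ l.length = wordLength S x ∧ l.prod = x := by
  have hx : x ∈ Submonoid.closure (S ∪ S⁻¹) := by
    rw [← Subgroup.closure_toSubmonoid, hS.2.2]; trivial
  obtain ⟨l, hl, rfl⟩ := Submonoid.exists_list_of_mem_closure hx
  have hlS : ∀ s ∈ l, s ∈ S := fun s hs => (hl s hs).elim id fun h => by simpa using hS.2.1 _ h
  have hmem : l.length ∈ {n : ℕ | ∃ l' : List G, (∀ s ∈ l', s ∈ S) ∧ l'.length = n ∧
      l'.prod = l.prod} := ⟨l, hlS, rfl, rfl⟩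
  exact Nat.sInf_mem ⟨_, hmem⟩

theorem wordLength_one : wordLength S (1 : G) = 0 :=
  Nat.le_zero.mp (wordLength_le_length (l := []) (by simp) rfl)

theorem wordLength_le_one_of_mem {s : G} (hs : s ∈ S) : wordLength S s ≤ 1 :=
  wordLength_le_length (l := [s]) (by simpa) (by simp)

theorem wordLength_mul_le (hS : FinSymGen S) (x y : G) :
    wordLength S (x * y) ≤ wordLength S x + wordLength S y := by
  obtain ⟨l₁, hl₁, hlen₁, rfl⟩ := exists_list_length_eq_wordLength hS x
  obtain ⟨l₂, hl₂, hlen₂, rfl⟩ := exists_list_length_eq_wordLength hS y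
  rw [← hlen₁, ← hlen₂, ← List.length_append, ← List.prod_append]
  exact wordLength_le_length (fun s hs => (List.mem_append.mp hs).elim (hl₁ s) (hl₂ s)) rfl

theorem wordLength_inv (hS : FinSymGen S) (x : G) : wordLength S x⁻¹ = wordLength S x := by
  suffices key : ∀ y : G, wordLength S y⁻¹ ≤ wordLength S y from
    le_antisymm (key x) (by simpa using key x⁻¹)
  intro y
  obtain ⟨l, hl, hlen, rfl⟩ := exists_list_length_eq_wordLength hS y
  rw [← hlen, List.prod_inv_reverse, ← List.length_map (f := fun t : G => t⁻¹),
    ← List.length_reverse]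
  refine wordLength_le_length (fun s hs => ?_) rfl
  obtain ⟨t, ht, rfl⟩ := List.mem_map.mp (List.mem_reverse.mp hs)
  exact hS.2.1 t (hl t ht)

theorem wordLength_inv_mul_comm (hS : FinSymGen S) (x y : G) :
    wordLength S (x⁻¹ * y) = wordLength S (y⁻¹ * x) := by
  rw [← wordLength_inv hS, mul_inv_rev, inv_inv]

theorem finite_setOf_wordLength_le (hS : FinSymGen S) (n : ℕ) :
    {x : G | wordLength S x ≤ n}.Finite := by
  have : Finite S := hS.1.to_subtype
  refine ((List.finite_length_le S n).image fun l => (l.map Subtype.val).prod).subset ?_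
  intro x hx
  obtain ⟨l, hl, hlen, rfl⟩ := exists_list_length_eq_wordLength hS x
  refine ⟨l.attach.map fun s => ⟨s.1, hl s.1 s.2⟩, by simpa [hlen] using hx, ?_⟩
  simp [Function.comp_def]

theorem exists_wordLength_le_and_add_le (hS : FinSymGen S) {x : G} {k : ℕ}
    (hk : k ≤ wordLength S x) :
    ∃ y : G, wordLength S y ≤ k ∧ wordLength S (y⁻¹ * x) + k ≤ wordLength S x := by
  obtain ⟨l, hl, hlen, rfl⟩ := exists_list_length_eq_wordLength hS x
  refine ⟨(l.take k).prod, ?_, ?_⟩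
  · exact (wordLength_le_length (fun s hs => hl s (List.mem_of_mem_take hs)) rfl).trans
      (List.length_take_le k l)
  · have hdrop : ((l.take k).prod)⁻¹ * l.prod = (l.drop k).prod := by
      rw [← List.prod_take_mul_prod_drop l k, inv_mul_cancel_left]
    rw [hdrop]
    have := wordLength_le_length (x := (l.drop k).prod)
      (fun s hs => hl s (List.mem_of_mem_drop hs)) rfl
    simp only [List.length_drop] at this
    omega

theorem exists_crossing_of_list (hS : FinSymGen S) :
    ∀ (l : List G), (∀ s ∈ l, s ∈ S) → ∀ (P : G → Prop), ¬ P 1 → P l.prod →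
      ∃ x, ∃ s ∈ S, ¬ P x ∧ P (x * s) ∧
        wordLength S x + wordLength S (x⁻¹ * l.prod) ≤ l.length
  | [], _, _, h1, hl => absurd hl h1
  | a :: l, hal, P, h1, hl => by
    have ha : a ∈ S := hal a List.mem_cons_self
    by_cases hPa : P a
    · refine ⟨1, a, ha, h1, by simpa using hPa, ?_⟩
      have hal' : ∀ s ∈ l, s ∈ S := fun s hs => hal s (List.mem_cons_of_mem a hs)
      have hlen := (wordLength_mul_le hS a l.prod).trans
        (add_le_add (wordLength_le_one_of_mem ha) (wordLength_le_length hal' rfl))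
      rw [wordLength_one, inv_one, one_mul, List.prod_cons, List.length_cons]
      omega
    · obtain ⟨x, s, hs, hx, hxs, hlen⟩ := exists_crossing_of_list hS l
        (fun s hs => hal s (List.mem_cons_of_mem a hs)) (fun y => P (a * y)) (by simpa using hPa)
        (by simpa using hl)
      refine ⟨a * x, s, hs, hx, by simpa [mul_assoc] using hxs, ?_⟩
      have hax := wordLength_mul_le hS a x
      have ha1 := wordLength_le_one_of_mem ha
      rw [List.prod_cons, List.length_cons, mul_inv_rev, mul_assoc, inv_mul_cancel_left]
      omega

theorem exists_crossing (hS : FinSymGen S) (P : G → Prop) {w v : G} (hw : ¬ P w) (hv : P v) :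
    ∃ x, ∃ s ∈ S, ¬ P x ∧ P (x * s) ∧
      wordLength S (w⁻¹ * x) + wordLength S (x⁻¹ * v) ≤ wordLength S (w⁻¹ * v) := by
  obtain ⟨l, hl, hlen, hprod⟩ := exists_list_length_eq_wordLength hS (w⁻¹ * v)
  obtain ⟨x, s, hs, hx, hxs, hle⟩ := exists_crossing_of_list hS l hl (fun y => P (w * y))
    (by simpa using hw) (by simpa [hprod] using hv)
  refine ⟨w * x, s, hs, hx, by simpa [mul_assoc] using hxs, ?_⟩
  simpa [hprod, hlen, mul_assoc] using hle

end WordLength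

section BusemannLimit

variable {G : Type*} [Group G] {S : Set G} {u : ℕ → G} {h : G → ℝ}

theorem bus_wordDist (hS : FinSymGen S) (x y : G) :
    bus (wordDist S) x y = wordLength S (x⁻¹ * y) - wordLength S x := by
  simp [bus, wordDist, wordLength_inv hS]

theorem abs_bus_wordDist_le (hS : FinSymGen S) (x y : G) :
    |bus (wordDist S) x y| ≤ wordLength S y := by
  have hle := wordLength_mul_le hS x⁻¹ y
  have hge := wordLength_mul_le hS (x⁻¹ * y) y⁻¹
  rw [mul_inv_cancel_right, wordLength_inv hS] at hge
  rw [wordLength_inv hS] at hle hge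
  rw [bus_wordDist hS, abs_sub_le_iff]
  constructor
  · have := (Nat.cast_le (α := ℝ)).mpr hle; push_cast at this; linarith
  · have := (Nat.cast_le (α := ℝ)).mpr hge; push_cast at this; linarith

theorem apply_one_eq_zero_of_tendsto_bus
    (hu : ∀ y, Tendsto (fun n => bus (wordDist S) (u n) y) atTop (𝓝 (h y))) : h 1 = 0 :=
  tendsto_nhds_unique (hu 1) (by simp [bus])

theorem abs_le_wordLength_of_tendsto_bus (hS : FinSymGen S)
    (hu : ∀ y, Tendsto (fun n => bus (wordDist S) (u n) y) atTop (𝓝 (h y))) (y : G) :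
    |h y| ≤ wordLength S y :=
  le_of_tendsto ((continuous_abs.tendsto _).comp (hu y))
    (Eventually.of_forall fun n => abs_bus_wordDist_le hS (u n) y)

theorem eq_of_frequently_bus_eq
    (hu : ∀ y, Tendsto (fun n => bus (wordDist S) (u n) y) atTop (𝓝 (h y))) {y : G} {c : ℝ}
    (hc : ∃ᶠ n in atTop, bus (wordDist S) (u n) y = c) : h y = c :=
  tendsto_nhds_unique_of_frequently_eq (hu y) tendsto_const_nhds hc

theorem tendsto_wordLength_of_tendsto_bus (hS : FinSymGen S)
    (hu : ∀ y, Tendsto (fun n => bus (wordDist S) (u n) y) atTop (𝓝 (h y)))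
    (hnb : ∀ x, h ≠ bus (wordDist S) x) :
    Tendsto (fun n => wordLength S (u n)) atTop atTop := by
  refine tendsto_atTop.mpr fun m => ?_
  by_contra hfreq
  have hball : ∃ᶠ n in atTop, ∃ x ∈ {x : G | wordLength S x ≤ m}, u n = x :=
    (not_eventually.mp hfreq).mono fun n hn => ⟨u n, (not_le.mp hn).le, rfl⟩
  obtain ⟨x, -, hx⟩ := ((finite_setOf_wordLength_le hS m).frequently_exists).mp hball
  exact hnb x (funext fun y => eq_of_frequently_bus_eq hu (hx.mono fun n hn => by rw [hn]))

theorem exists_wordLength_eq_and_eq_neg (hS : FinSymGen S)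
    (hu : ∀ y, Tendsto (fun n => bus (wordDist S) (u n) y) atTop (𝓝 (h y)))
    (hnb : ∀ x, h ≠ bus (wordDist S) x) (k : ℕ) :
    ∃ y, wordLength S y = k ∧ h y = -k := by
  have hev : ∀ᶠ n in atTop,
      ∃ y ∈ {y : G | wordLength S y ≤ k}, bus (wordDist S) (u n) y = -k := by
    filter_upwards [tendsto_atTop.mp (tendsto_wordLength_of_tendsto_bus hS hu hnb) k] with n hn
    obtain ⟨y, hyk, hy⟩ := exists_wordLength_le_and_add_le hS hn
    refine ⟨y, hyk, le_antisymm ?_ ?_⟩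
    · rw [bus_wordDist hS, wordLength_inv_mul_comm hS]
      have := (Nat.cast_le (α := ℝ)).mpr hy; push_cast at this; linarith
    · have hyk' : (wordLength S y : ℝ) ≤ k := by exact_mod_cast hyk
      linarith [neg_abs_le (bus (wordDist S) (u n) y), abs_bus_wordDist_le hS (u n) y]
  obtain ⟨y, hyk, hy⟩ :=
    ((finite_setOf_wordLength_le hS k).frequently_exists).mp hev.frequently
  have hyeq := eq_of_frequently_bus_eq hu hy
  refine ⟨y, le_antisymm hyk ?_, hyeq⟩
  have := abs_le_wordLength_of_tendsto_bus hS hu y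
  rw [hyeq, abs_neg, Nat.abs_cast] at this
  exact_mod_cast this

theorem eventually_wordLength_add_le (hS : FinSymGen S)
    (hu : ∀ y, Tendsto (fun n => bus (wordDist S) (u n) y) atTop (𝓝 (h y)))
    {y : G} {c : ℕ} (hy : h y + wordLength S y ≤ c) :
    ∀ᶠ n in atTop, wordLength S y + wordLength S (y⁻¹ * u n) ≤ wordLength S (u n) + c := by
  have hlt : h y < c - wordLength S y + 1 := by linarith
  filter_upwards [(hu y).eventually (gt_mem_nhds hlt)] with n hn
  rw [bus_wordDist hS, wordLength_inv_mul_comm hS] at hn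
  have : wordLength S y + wordLength S (y⁻¹ * u n) < wordLength S (u n) + c + 1 := by
    have : (wordLength S y + wordLength S (y⁻¹ * u n) : ℝ) < wordLength S (u n) + c + 1 := by
      linarith
    exact_mod_cast this
  omega

end BusemannLimit

section Action

variable {G : Type*} [Group G] {h : G → ℝ}

theorem act_mul (x y : G) : act (x * y) h = act x (act y h) := by
  funext z
  simp only [act, mul_inv_rev, mul_assoc]
  ring

theorem act_one (h1 : h 1 = 0) : act 1 h = h := by
  funext z
  simp [act, h1]

theorem exists_pow_act_eq_self (h1 : h 1 = 0) (hfin : (Set.range fun x : G => act x h).Finite)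
    (g : G) : ∃ e : ℕ, 0 < e ∧ act (g ^ e) h = h := by
  obtain ⟨m, n, hmn, heq⟩ :=
    hfin.exists_lt_map_eq_of_forall_mem (f := fun n : ℕ => act (g ^ n) h) fun n =>
      Set.mem_range_self (g ^ n)
  refine ⟨n - m, Nat.sub_pos_of_lt hmn, ?_⟩
  have hgn : g ^ n = g ^ m * g ^ (n - m) := by rw [← pow_add, Nat.add_sub_cancel' hmn.le]
  calc act (g ^ (n - m)) h = act (g ^ m)⁻¹ (act (g ^ n) h) := by
        rw [← act_mul, hgn, inv_mul_cancel_left]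
    _ = h := by rw [← heq, ← act_mul, inv_mul_cancel, act_one h1]

theorem exists_pow_apply_mul_eq_add (h1 : h 1 = 0)
    (hfin : (Set.range fun x : G => act x h).Finite) (g : G) :
    ∃ e : ℕ, 0 < e ∧ ∀ z, h (g ^ e * z) = h (g ^ e) + h z := by
  obtain ⟨e, he, hact⟩ := exists_pow_act_eq_self h1 hfin g⁻¹
  refine ⟨e, he, fun z => ?_⟩
  have := congrFun hact z
  simp only [act, inv_pow, inv_inv] at this
  linarith

end Action

namespace List

variable {β : Type*} [DecidableEq β]

def commonPrefix : List β → List β → List β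
  | a :: l, b :: m => if a = b then a :: commonPrefix l m else []
  | _, _ => []

theorem commonPrefix_prefix_left : ∀ l m : List β, commonPrefix l m <+: l
  | [], _ => by simp [commonPrefix]
  | _ :: _, [] => by simp [commonPrefix]
  | a :: l, b :: m => by
    by_cases hab : a = b
    · simpa [commonPrefix, hab] using commonPrefix_prefix_left l m
    · simp [commonPrefix, hab]

theorem commonPrefix_prefix_right : ∀ l m : List β, commonPrefix l m <+: m
  | [], _ => by simp [commonPrefix]
  | _ :: _, [] => by simp [commonPrefix]
  | a :: l, b :: m => by
    by_cases hab : a = b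
    · subst hab; simpa [commonPrefix] using commonPrefix_prefix_right l m
    · simp [commonPrefix, hab]

theorem head?_drop_commonPrefix_ne : ∀ (l m : List β) {c : β},
    (l.drop (commonPrefix l m).length).head? = some c →
      (m.drop (commonPrefix l m).length).head? ≠ some c
  | [], _, _ => by simp [commonPrefix]
  | _ :: _, [], _ => by simp [commonPrefix]
  | a :: l, b :: m, c => by
    by_cases hab : a = b
    · subst hab; simpa [commonPrefix] using head?_drop_commonPrefix_ne l m
    · simp only [commonPrefix, hab, if_false, length_nil, drop_zero, head?_cons,
        Option.some.injEq]
      rintro rfl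
      exact fun hb => hab (Option.some_injective _ hb).symm

end List

namespace FreeGroup

variable {α : Type*} [DecidableEq α]

theorem toWord_mul_of_isReduced_append {x y : FreeGroup α}
    (h : IsReduced (x.toWord ++ y.toWord)) : (x * y).toWord = x.toWord ++ y.toWord := by
  rw [toWord_mul, h.reduce_eq]

theorem toWord_inv_mul_of_toWord_eq_append {p x : FreeGroup α} {w : List (α × Bool)}
    (hx : x.toWord = p.toWord ++ w) : (p⁻¹ * x).toWord = w := by
  have hw : IsReduced w := isReduced_toWord.infix ⟨p.toWord, [], by rw [hx, List.append_nil]⟩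
  have hpx : p⁻¹ * x = mk w := by
    rw [inv_mul_eq_iff_eq_mul, ← toWord_inj, hx, toWord_mul, toWord_mk, hw.reduce_eq,
      (hx ▸ isReduced_toWord : IsReduced (p.toWord ++ w)).reduce_eq]
  rw [hpx, toWord_mk, hw.reduce_eq]

theorem norm_add_norm_inv_mul_of_prefix {p x : FreeGroup α} (hp : p.toWord <+: x.toWord) :
    norm p + norm (p⁻¹ * x) = norm x := by
  obtain ⟨w, hw⟩ := hp
  rw [norm, norm, norm, toWord_inv_mul_of_toWord_eq_append hw.symm, ← hw, List.length_append]

theorem natCast_norm_inv_mul_of_prefix_of_prefix {p p' u : FreeGroup α}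
    (hp : p.toWord <+: u.toWord) (hp' : p'.toWord <+: u.toWord) :
    (norm (p⁻¹ * p') : ℤ) = |(norm p : ℤ) - norm p'| := by
  rcases List.prefix_or_prefix_of_prefix hp hp' with h | h
  · have := norm_add_norm_inv_mul_of_prefix h
    rw [abs_of_nonpos (by omega)]
    omega
  · have := norm_add_norm_inv_mul_of_prefix h
    rw [← norm_inv_eq, mul_inv_rev, inv_inv, abs_of_nonneg (by omega)]
    omega

/-- The branching point of the geodesics from `1` to `z` and from `1` to `u` in the Cayley tree. -/
def meet (z u : FreeGroup α) : FreeGroup α := mk (List.commonPrefix z.toWord u.toWord)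

theorem toWord_meet (z u : FreeGroup α) :
    (meet z u).toWord = List.commonPrefix z.toWord u.toWord := by
  rw [meet, toWord_mk]
  exact (isReduced_toWord.infix (List.commonPrefix_prefix_left _ _).isInfix).reduce_eq

theorem toWord_meet_prefix_left (z u : FreeGroup α) : (meet z u).toWord <+: z.toWord :=
  toWord_meet z u ▸ List.commonPrefix_prefix_left _ _

theorem toWord_meet_prefix_right (z u : FreeGroup α) : (meet z u).toWord <+: u.toWord :=
  toWord_meet z u ▸ List.commonPrefix_prefix_right _ _

/-- `v` lies in the component of the Cayley tree minus `p` entered through the edge labelled `c`. -/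
def InBranch (p : FreeGroup α) (c : α × Bool) (v : FreeGroup α) : Prop :=
  (p⁻¹ * v).toWord.head? = some c

theorem norm_inv_mul_eq_add_of_inBranch {p v v' : FreeGroup α} {c : α × Bool}
    (hv : InBranch p c v) (hv' : ¬ InBranch p c v') :
    norm (v⁻¹ * v') = norm (p⁻¹ * v) + norm (p⁻¹ * v') := by
  have hvv' : v⁻¹ * v' = (p⁻¹ * v)⁻¹ * (p⁻¹ * v') := by group
  have hlast : (p⁻¹ * v)⁻¹.toWord.getLast? = some (c.1, !c.2) := by
    rw [toWord_inv, invRev, List.getLast?_reverse, List.head?_map, hv]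
    rfl
  have hred : IsReduced ((p⁻¹ * v)⁻¹.toWord ++ (p⁻¹ * v').toWord) := by
    refine List.isChain_append.mpr ⟨isReduced_toWord, isReduced_toWord, ?_⟩
    intro a ha b hb hab
    rw [hlast, Option.mem_some_iff] at ha
    subst ha
    obtain ⟨b₁, b₂⟩ := b
    obtain ⟨c₁, c₂⟩ := c
    simp only at hab ⊢
    subst hab
    cases b₂ <;> cases c₂ <;> simp_all [InBranch]
  rw [hvv', norm, toWord_mul_of_isReduced_append hred, List.length_append, ← norm, ← norm,
    norm_inv_eq]

theorem not_inBranch_one {p z : FreeGroup α} {c : α × Bool} (hp : p.toWord <+: z.toWord)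
    (hz : InBranch p c z) : ¬ InBranch p c 1 := by
  obtain ⟨w, hw⟩ := hp
  have hw' := toWord_inv_mul_of_toWord_eq_append hw.symm
  rw [InBranch, hw'] at hz
  obtain ⟨c', w, rfl⟩ := List.exists_cons_of_ne_nil (fun hnil => by simp [hnil] at hz : w ≠ [])
  simp only [List.head?_cons, Option.some.injEq] at hz
  subst hz
  intro h1
  rw [InBranch, mul_one, toWord_inv, invRev, List.head?_reverse, List.getLast?_map] at h1
  obtain ⟨a, ha, hac⟩ := Option.map_eq_some_iff.mp h1
  have hred := List.isChain_append.mp (hw ▸ isReduced_toWord (x := z))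
  have := hred.2.2 a ha c' (by simp) (by rw [← hac])
  rw [← hac] at this
  simp at this

theorem not_inBranch_meet {z u : FreeGroup α} {c : α × Bool} (hz : InBranch (meet z u) c z) :
    ¬ InBranch (meet z u) c u := by
  have hsplit : ∀ x : FreeGroup α, (meet z u).toWord <+: x.toWord →
      ((meet z u)⁻¹ * x).toWord = x.toWord.drop (List.commonPrefix z.toWord u.toWord).length :=
    fun x hx => toWord_inv_mul_of_toWord_eq_append <| by
      rw [← toWord_meet, List.prefix_iff_eq_append.mp hx]
  rw [InBranch, hsplit z (toWord_meet_prefix_left z u)] at hz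
  rw [InBranch, hsplit u (toWord_meet_prefix_right z u)]
  exact List.head?_drop_commonPrefix_ne _ _ hz

theorem finite_setOf_norm_le [Finite α] (n : ℕ) : {x : FreeGroup α | norm x ≤ n}.Finite :=
  ((List.finite_length_le (α × Bool) n).preimage toWord_injective.injOn).subset fun _ hx => hx

variable {S : Set (FreeGroup α)} {L : ℕ}

theorem exists_norm_le_and_wordLength_le [Finite α] (hS : FinSymGen S) :
    ∃ L : ℕ, ∀ x : FreeGroup α, norm x ≤ L * wordLength S x ∧ wordLength S x ≤ L * norm x := by
  obtain ⟨L₁, hL₁⟩ := (hS.1.image norm).bddAbove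
  obtain ⟨L₂, hL₂⟩ := (Set.finite_range fun a : α => wordLength S (of a)).bddAbove
  refine ⟨L₁ + L₂, fun x => ⟨?_, ?_⟩⟩
  · obtain ⟨l, hl, hlen, rfl⟩ := exists_list_length_eq_wordLength hS x
    rw [← hlen]
    exact apply_prod_le_mul_length norm norm_one norm_mul_le l fun s hs =>
      (hL₁ ⟨s, hl s hs, rfl⟩).trans (Nat.le_add_right _ _)
  · have hx : x = (x.toWord.map fun e => cond e.2 (of e.1) (of e.1)⁻¹).prod := by
      rw [← lift_mk, mk_toWord, lift_of_apply]
    have key := apply_prod_le_mul_length (wordLength S) wordLength_one (wordLength_mul_le hS)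
      (L := L₁ + L₂) (x.toWord.map fun e => cond e.2 (of e.1) (of e.1)⁻¹) fun s hs => ?_
    · rwa [← hx, List.length_map] at key
    obtain ⟨⟨a, b⟩, -, rfl⟩ := List.mem_map.mp hs
    have ha : wordLength S (of a) ≤ L₁ + L₂ := (hL₂ ⟨a, rfl⟩).trans (Nat.le_add_left _ _)
    cases b <;> simpa [wordLength_inv hS] using ha

theorem exists_near_of_inBranch (hS : FinSymGen S) (hL : ∀ x, norm x ≤ L * wordLength S x)
    {p w v : FreeGroup α} {c : α × Bool} (hw : ¬ InBranch p c w) (hv : InBranch p c v) :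
    ∃ x, norm (p⁻¹ * x) ≤ L ∧
      wordLength S (w⁻¹ * x) + wordLength S (x⁻¹ * v) ≤ wordLength S (w⁻¹ * v) := by
  obtain ⟨x, s, hs, hx, hxs, hle⟩ := exists_crossing hS (InBranch p c) hw hv
  refine ⟨x, ?_, hle⟩
  have hsep := norm_inv_mul_eq_add_of_inBranch hxs hx
  have hstep : norm ((x * s)⁻¹ * x) ≤ L := by
    rw [mul_inv_rev, inv_mul_cancel_right, norm_inv_eq]
    simpa using (hL s).trans (Nat.mul_le_mul_left L (wordLength_le_one_of_mem hs))
  omega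

theorem norm_inv_mul_le_of_inBranch (hS : FinSymGen S)
    (hL : ∀ x, norm x ≤ L * wordLength S x ∧ wordLength S x ≤ L * norm x)
    {p z u : FreeGroup α} {b : α × Bool} {c : ℕ} (hz : InBranch p b z) (h1 : ¬ InBranch p b 1)
    (hu : ¬ InBranch p b u) (hzu : wordLength S z + wordLength S (z⁻¹ * u) ≤ wordLength S u + c) :
    norm (p⁻¹ * z) ≤ L + L * (2 * L * L + c) := by
  -- The word geodesics from `1` and from `u` to `z` enter the branch at points `x₁`, `x₂` near `p`;
  -- as `1 → z → u` is almost geodesic, `z` is then word-close to `x₂`.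
  obtain ⟨x₁, hx₁, hle₁⟩ := exists_near_of_inBranch hS (fun x => (hL x).1) h1 hz
  obtain ⟨x₂, hx₂, hle₂⟩ := exists_near_of_inBranch hS (fun x => (hL x).1) hu hz
  simp only [inv_one, one_mul] at hle₁
  have htri : wordLength S u ≤
      wordLength S x₁ + wordLength S (x₁⁻¹ * x₂) + wordLength S (u⁻¹ * x₂) := by
    have hu : x₁ * (x₁⁻¹ * x₂) * (u⁻¹ * x₂)⁻¹ = u := by group
    have h₁ := wordLength_mul_le hS (x₁ * (x₁⁻¹ * x₂)) (u⁻¹ * x₂)⁻¹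
    have h₂ := wordLength_mul_le hS x₁ (x₁⁻¹ * x₂)
    rw [hu, wordLength_inv hS] at h₁
    omega
  have hx₁₂ : wordLength S (x₁⁻¹ * x₂) ≤ 2 * L * L := by
    have hnorm : norm (x₁⁻¹ * x₂) ≤ 2 * L := by
      have := norm_mul_le (p⁻¹ * x₁)⁻¹ (p⁻¹ * x₂)
      rw [norm_inv_eq, mul_inv_rev, inv_inv, mul_assoc, mul_inv_cancel_left] at this
      omega
    calc wordLength S (x₁⁻¹ * x₂) ≤ L * norm (x₁⁻¹ * x₂) := (hL _).2
      _ ≤ L * (2 * L) := Nat.mul_le_mul_left L hnorm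
      _ = 2 * L * L := by ring
  rw [wordLength_inv_mul_comm hS z u] at hzu
  have hfar : wordLength S (x₂⁻¹ * z) ≤ 2 * L * L + c := by omega
  calc norm (p⁻¹ * z) = norm ((p⁻¹ * x₂) * (x₂⁻¹ * z)) := by group
    _ ≤ norm (p⁻¹ * x₂) + norm (x₂⁻¹ * z) := norm_mul_le _ _
    _ ≤ L + L * (2 * L * L + c) :=
      add_le_add hx₂ ((hL _).1.trans (Nat.mul_le_mul_left L hfar))

/-- Morse lemma: a point almost on a word geodesic from `1` to `u` stays close to the tree
geodesic from `1` to `u`. -/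
theorem norm_inv_mul_meet_le (hS : FinSymGen S)
    (hL : ∀ x, norm x ≤ L * wordLength S x ∧ wordLength S x ≤ L * norm x)
    {z u : FreeGroup α} {c : ℕ}
    (hzu : wordLength S z + wordLength S (z⁻¹ * u) ≤ wordLength S u + c) :
    norm ((meet z u)⁻¹ * z) ≤ L + L * (2 * L * L + c) := by
  rcases hpz : ((meet z u)⁻¹ * z).toWord with _ | ⟨b, ζ⟩
  · simp [norm, hpz]
  have hz : InBranch (meet z u) b z := by simp [InBranch, hpz]
  exact norm_inv_mul_le_of_inBranch hS hL hz (not_inBranch_one (toWord_meet_prefix_left z u) hz)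
    (not_inBranch_meet hz) hzu

theorem norm_inv_mul_le_of_meet (y y' u : FreeGroup α) :
    (norm (y⁻¹ * y') : ℤ) ≤ |(norm y : ℤ) - norm y'| +
      2 * (norm ((meet y u)⁻¹ * y) + norm ((meet y' u)⁻¹ * y')) := by
  set p := meet y u
  set p' := meet y' u
  have hsplit : norm (y⁻¹ * y') ≤ norm (p⁻¹ * y) + norm (p⁻¹ * p') + norm (p'⁻¹ * y') := by
    have h₁ := norm_mul_le ((p⁻¹ * y)⁻¹ * (p⁻¹ * p')) (p'⁻¹ * y')
    have h₂ := norm_mul_le (p⁻¹ * y)⁻¹ (p⁻¹ * p')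
    rw [norm_inv_eq] at h₂
    have : (p⁻¹ * y)⁻¹ * (p⁻¹ * p') * (p'⁻¹ * y') = y⁻¹ * y' := by group
    rw [this] at h₁
    omega
  have hpp' := natCast_norm_inv_mul_of_prefix_of_prefix (toWord_meet_prefix_right y u)
    (toWord_meet_prefix_right y' u)
  have hy := norm_add_norm_inv_mul_of_prefix (toWord_meet_prefix_left y u)
  have hy' := norm_add_norm_inv_mul_of_prefix (toWord_meet_prefix_left y' u)
  zify at hsplit hy hy'
  rw [hpp'] at hsplit
  cases abs_cases ((norm p : ℤ) - norm p') <;> cases abs_cases ((norm y : ℤ) - norm y') <;>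
    linarith

theorem exists_norm_conj_le (hS : FinSymGen S)
    (hL : ∀ x, norm x ≤ L * wordLength S x ∧ wordLength S x ≤ L * norm x)
    {u : ℕ → FreeGroup α} {h : FreeGroup α → ℝ}
    (hu : ∀ y, Tendsto (fun n => bus (wordDist S) (u n) y) atTop (𝓝 (h y)))
    {g : FreeGroup α} (hg : ∀ z, h (g * z) = h g + h z) :
    ∃ B : ℕ, ∀ y, h y = -wordLength S y → norm (y⁻¹ * g * y) ≤ B := by
  refine ⟨norm g + 2 * ((L + L * (2 * L * L + 0)) + (L + L * (2 * L * L + 2 * wordLength S g))),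
    fun y hy => ?_⟩
  have hgy : h (g * y) + wordLength S (g * y) ≤ (2 * wordLength S g : ℕ) := by
    have hgy := wordLength_mul_le hS g y
    have hg' := (abs_le.mp (abs_le_wordLength_of_tendsto_bus hS hu g)).2
    rw [hg y, hy]
    have := (Nat.cast_le (α := ℝ)).mpr hgy
    push_cast at this ⊢
    linarith
  obtain ⟨n, hn₁, hn₂⟩ := ((eventually_wordLength_add_le hS hu (y := y) (c := 0) (by simp [hy])).and
    (eventually_wordLength_add_le hS hu hgy)).exists
  have hy₁ := norm_inv_mul_meet_le hS hL hn₁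
  have hy₂ := norm_inv_mul_meet_le hS hL hn₂
  have hconj := norm_inv_mul_le_of_meet y (g * y) (u n)
  have hgnorm : |(norm y : ℤ) - norm (g * y)| ≤ norm g := by
    have h₁ := norm_mul_le g y
    have h₂ := norm_mul_le g⁻¹ (g * y)
    rw [norm_inv_eq, inv_mul_cancel_left] at h₂
    rw [abs_le]
    constructor <;> omega
  rw [← mul_assoc] at hconj
  zify at hy₁ hy₂ ⊢
  linarith

theorem of_mul_of_ne_of_mul_of {a b : α} (hab : a ≠ b) : of a * of b ≠ of b * of a := by
  intro h
  have := congrArg toWord h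
  simp [toWord_mul, toWord_of, hab] at this

end FreeGroup

namespace IsFreeGroup

variable {G : Type*} [Group G] [IsFreeGroup G]

theorem isCyclic_of_isMulCommutative [IsMulCommutative G] : IsCyclic G := by
  classical
  let e := IsFreeGroup.mulEquiv G
  have : Subsingleton (Generators G) := ⟨fun a b => by
    by_contra hab
    refine FreeGroup.of_mul_of_ne_of_mul_of hab (e.injective ?_)
    simp only [map_mul]
    exact Std.Commutative.comm _ _⟩
  have : IsCyclic (FreeGroup (Generators G)) := by
    rcases isEmpty_or_nonempty (Generators G) with _ | ⟨⟨t⟩⟩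
    · infer_instance
    · have : Unique (Generators G) := uniqueOfSubsingleton t
      infer_instance
  exact isCyclic_of_surjective e e.surjective

theorem exists_zpow_eq_zpow_of_commute {x y : G} (hxy : Commute x y) (hx : x ≠ 1) (hy : y ≠ 1) :
    ∃ m n : ℤ, m ≠ 0 ∧ n ≠ 0 ∧ x ^ m = y ^ n := by
  let K := Subgroup.closure {x, y}
  have : IsMulCommutative K := Subgroup.isMulCommutative_closure <| by
    rintro a (rfl | rfl) b (rfl | rfl) <;> first | rfl | exact hxy.eq | exact hxy.eq.symm
  have : IsCyclic K := isCyclic_of_isMulCommutative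
  obtain ⟨c, hc⟩ := IsCyclic.exists_generator (α := K)
  obtain ⟨i, hi⟩ := hc ⟨x, Subgroup.subset_closure (by simp)⟩
  obtain ⟨j, hj⟩ := hc ⟨y, Subgroup.subset_closure (by simp)⟩
  have hi' : (c : G) ^ i = x := congrArg Subtype.val hi
  have hj' : (c : G) ^ j = y := congrArg Subtype.val hj
  refine ⟨j, i, ?_, ?_, ?_⟩
  · rintro rfl; exact hy (by simp [← hj'])
  · rintro rfl; exact hx (by simp [← hi'])
  · rw [← hi', ← hj', ← zpow_mul, ← zpow_mul, mul_comm]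

end IsFreeGroup

theorem FreeGroup.eq_one_of_commute_of_pow_of_pow {α : Type*} {a b : α} (hab : a ≠ b)
    {e₁ e₂ : ℕ} (he₁ : 0 < e₁) (he₂ : 0 < e₂) {q : FreeGroup α}
    (h₁ : Commute q (of a ^ e₁)) (h₂ : Commute q (of b ^ e₂)) : q = 1 := by
  classical
  by_contra hq
  have hpow : ∀ (x : α) {e : ℕ}, 0 < e → of x ^ e ≠ 1 := fun x e he h => by
    have := norm_of_pow x e
    rw [h, norm_one] at this
    omega
  obtain ⟨m₁, n₁, hm₁, hn₁, hq₁⟩ := IsFreeGroup.exists_zpow_eq_zpow_of_commute h₁ hq (hpow a he₁)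
  obtain ⟨m₂, n₂, hm₂, hn₂, hq₂⟩ := IsFreeGroup.exists_zpow_eq_zpow_of_commute h₂ hq (hpow b he₂)
  have key : (of a : FreeGroup α) ^ ((e₁ : ℤ) * n₁ * m₂) = of b ^ ((e₂ : ℤ) * n₂ * m₁) :=
    calc of a ^ ((e₁ : ℤ) * n₁ * m₂) = (q ^ m₁) ^ m₂ := by
          rw [hq₁, zpow_mul, zpow_mul, zpow_natCast]
      _ = (q ^ m₂) ^ m₁ := by rw [← zpow_mul, ← zpow_mul, mul_comm]
      _ = of b ^ ((e₂ : ℤ) * n₂ * m₁) := by rw [hq₂, zpow_mul, zpow_mul, zpow_natCast]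
  have hcount := congrArg (lift fun x => if x = a then Multiplicative.ofAdd (1 : ℤ) else 1) key
  simp [hab.symm, he₁.ne', hn₁, hm₂] at hcount

theorem commute_mul_inv_of_conj_eq {G : Type*} [Group G] {x y y' : G}
    (h : y⁻¹ * x * y = y'⁻¹ * x * y') : Commute (y' * y⁻¹) x := by
  have hx : x = y * (y'⁻¹ * x * y') * y⁻¹ := by rw [← h]; group
  show y' * y⁻¹ * x = x * (y' * y⁻¹)
  conv_lhs => rw [hx]
  group

/-- In any Cayley graph of the free group of rank `d ≥ 2`, no
metric functional has a finite orbit. -/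
theorem freeGroup_no_finite_orbit_in_boundary
    {d : ℕ} (hd : 2 ≤ d) (S : Set (FreeGroup (Fin d))) (hS : FinSymGen S)
    (h : FreeGroup (Fin d) → ℝ) (hb : InBoundary (wordDist S) h) :
    (Set.range fun x : FreeGroup (Fin d) => act x h).Infinite := by
  intro hfin
  obtain ⟨⟨u, hu⟩, hnb⟩ := hb
  have h1 := apply_one_eq_zero_of_tendsto_bus hu
  choose Y hYlen hYcal using exists_wordLength_eq_and_eq_neg hS hu hnb
  have hY : ∀ k, h (Y k) = -wordLength S (Y k) := fun k => by rw [hYcal, hYlen]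
  obtain ⟨L, hL⟩ := FreeGroup.exists_norm_le_and_wordLength_le hS
  have : Nontrivial (Fin d) := Fin.nontrivial_iff_two_le.mpr hd
  obtain ⟨a, b, hab⟩ := exists_pair_ne (Fin d)
  obtain ⟨e₁, he₁, hg₁⟩ := exists_pow_apply_mul_eq_add h1 hfin (FreeGroup.of a)
  obtain ⟨e₂, he₂, hg₂⟩ := exists_pow_apply_mul_eq_add h1 hfin (FreeGroup.of b)
  obtain ⟨B₁, hB₁⟩ := FreeGroup.exists_norm_conj_le hS hL hu hg₁
  obtain ⟨B₂, hB₂⟩ := FreeGroup.exists_norm_conj_le hS hL hu hg₂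
  obtain ⟨k, -, k', -, hkk', hconj⟩ := Set.infinite_univ.exists_ne_map_eq_of_mapsTo
    (f := fun k => ((Y k)⁻¹ * FreeGroup.of a ^ e₁ * Y k, (Y k)⁻¹ * FreeGroup.of b ^ e₂ * Y k))
    (fun k _ => Set.mk_mem_prod (hB₁ (Y k) (hY k)) (hB₂ (Y k) (hY k)))
    ((FreeGroup.finite_setOf_norm_le B₁).prod (FreeGroup.finite_setOf_norm_le B₂))
  have hq : Y k' * (Y k)⁻¹ ≠ 1 := fun hq =>
    hkk' (by rw [← hYlen k, ← hYlen k', mul_inv_eq_one.mp hq])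
  exact hq (FreeGroup.eq_one_of_commute_of_pow_of_pow hab he₁ he₂
    (commute_mul_inv_of_conj_eq (Prod.ext_iff.mp hconj).1)
    (commute_mul_inv_of_conj_eq (Prod.ext_iff.mp hconj).2))
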